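/- Let λ₁ > 0, λ₂ > 0, α > 0 and θ ∈ [-1, 1], let D = λ₂α/(λ₁+λ₂α) + θλ₁·(2/(2λ₁+λ₂α) + 1/(λ₁+2λ₂α) - 2/(λ₁+λ₂α)), K = λ₁/D, and set p₁ = K/λ₁, p₂ = -K(1+θ)/(λ₁+λ₂α), p₃ = 2Kθ/(2λ₁+λ₂α), p₄ = Kθ/(λ₁+2λ₂α), p₅ = -Kθ/(λ₁+λ₂α). Write γ(a,x) = ∫₀^x t^{a-1}e^{-t} dt for the lower incomplete gamma function. Then for every natural number n ≥ 1 and every x₀ > 0, ∫₀^{x₀} xⁿ · K e^{-λ₁x}(1 - e^{-λ₂αx})(1 - θe^{-λ₂αx}(1 - 2e^{-λ₁x})) dx = p₁γ(n+1, λ₁x₀)/λ₁ⁿ + p₂γ(n+1,(λ₁+λ₂α)x₀)/(λ₁+λ₂α)ⁿ + p₃γ(n+1,(2λ₁+λ₂α)x₀)/(2λ₁+λ₂α)ⁿ + p₄γ(n+1,(λ₁+2λ₂α)x₀)/(λ₁+2λ₂α)ⁿ + p₅γ(n+1,2(λ₁+λ₂α)x₀)/(2ⁿ(λ₁+λ₂α)ⁿ).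 -/
import Mathlib

open MeasureTheory Real intervalIntegral

noncomputable def lowerIncGamma (a x : ℝ) : ℝ :=
  ∫ t in (0 : ℝ)..x, t ^ (a - 1) * Real.exp (-t)

lemma intble (n : ℕ) (c a b : ℝ) :
    IntervalIntegrable (fun x : ℝ => x ^ n * Real.exp (-c * x)) volume a b :=
  (Continuous.mul (continuous_pow n) (Real.continuous_exp.comp (by continuity))).intervalIntegrable a b

lemma key (n : ℕ) (c x₀ : ℝ) (hc : 0 < c) :
    ∫ x in (0 : ℝ)..x₀, x ^ n * Real.exp (-c * x)
      = lowerIncGamma ((n : ℝ) + 1) (c * x₀) / c ^ (n + 1) := by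
  have h := intervalIntegral.smul_integral_comp_mul_left
      (a := (0:ℝ)) (b := x₀) (fun t => t ^ n * Real.exp (-t)) c
  have hLIG : lowerIncGamma ((n : ℝ) + 1) (c * x₀)
      = ∫ t in (0:ℝ)..(c * x₀), t ^ n * Real.exp (-t) := by
    unfold lowerIncGamma
    congr 1
    ext t
    rw [add_sub_cancel_right, Real.rpow_natCast]
  rw [mul_zero] at h
  rw [hLIG, ← h]
  have h2 : (fun x : ℝ => (c * x) ^ n * Real.exp (-(c * x)))
      = fun x : ℝ => c ^ n * (x ^ n * Real.exp (-c * x)) := by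
    ext x; rw [mul_pow, neg_mul]; ring
  rw [smul_eq_mul, h2, intervalIntegral.integral_const_mul]
  field_simp
  ring

theorem gwed_conditional_moment
    (l₁ l₂ α θ : ℝ) (hl₁ : 0 < l₁) (hl₂ : 0 < l₂) (hα : 0 < α)
    (hθ : θ ∈ Set.Icc (-1 : ℝ) 1)
    (D K p₁ p₂ p₃ p₄ p₅ : ℝ)
    (hD : D = l₂ * α / (l₁ + l₂ * α)
        + θ * l₁ * (2 / (2 * l₁ + l₂ * α) + 1 / (l₁ + 2 * l₂ * α)
          - 2 / (l₁ + l₂ * α)))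
    (hK : K = l₁ / D)
    (hp₁ : p₁ = K / l₁)
    (hp₂ : p₂ = -(K * (1 + θ)) / (l₁ + l₂ * α))
    (hp₃ : p₃ = 2 * K * θ / (2 * l₁ + l₂ * α))
    (hp₄ : p₄ = K * θ / (l₁ + 2 * l₂ * α))
    (hp₅ : p₅ = -(K * θ) / (l₁ + l₂ * α)) :
    ∀ (n : ℕ), 1 ≤ n → ∀ x₀ : ℝ, 0 < x₀ →
      (∫ x in (0 : ℝ)..x₀,
          x ^ n * (K * Real.exp (-l₁ * x) * (1 - Real.exp (-l₂ * α * x))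
            * (1 - θ * Real.exp (-l₂ * α * x) * (1 - 2 * Real.exp (-l₁ * x)))))
        = p₁ * lowerIncGamma ((n : ℝ) + 1) (l₁ * x₀) / l₁ ^ n
          + p₂ * lowerIncGamma ((n : ℝ) + 1) ((l₁ + l₂ * α) * x₀) / (l₁ + l₂ * α) ^ n
          + p₃ * lowerIncGamma ((n : ℝ) + 1) ((2 * l₁ + l₂ * α) * x₀) / (2 * l₁ + l₂ * α) ^ n
          + p₄ * lowerIncGamma ((n : ℝ) + 1) ((l₁ + 2 * l₂ * α) * x₀) / (l₁ + 2 * l₂ * α) ^ n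
          + p₅ * lowerIncGamma ((n : ℝ) + 1) (2 * (l₁ + l₂ * α) * x₀)
              / (2 ^ n * (l₁ + l₂ * α) ^ n) := by
  intro n hn x₀ hx₀
  have ha : 0 < l₂ * α := mul_pos hl₂ hα
  have hc₂ : 0 < l₁ + l₂ * α := by linarith
  have hc₃ : 0 < 2 * l₁ + l₂ * α := by linarith
  have hc₄ : 0 < l₁ + 2 * l₂ * α := by linarith
  have hc₅ : 0 < 2 * (l₁ + l₂ * α) := by linarith
  have hcongr : ∀ x ∈ Set.uIcc (0:ℝ) x₀,
      x ^ n * (K * Real.exp (-l₁ * x) * (1 - Real.exp (-l₂ * α * x))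
        * (1 - θ * Real.exp (-l₂ * α * x) * (1 - 2 * Real.exp (-l₁ * x))))
      = K * (x ^ n * Real.exp (-l₁ * x))
        + (-(K * (1 + θ))) * (x ^ n * Real.exp (-(l₁ + l₂ * α) * x))
        + (2 * K * θ) * (x ^ n * Real.exp (-(2 * l₁ + l₂ * α) * x))
        + (K * θ) * (x ^ n * Real.exp (-(l₁ + 2 * l₂ * α) * x))
        + (-(2 * K * θ)) * (x ^ n * Real.exp (-(2 * (l₁ + l₂ * α)) * x)) := by
    intro x _
    have e₂ : Real.exp (-(l₁ + l₂ * α) * x) = Real.exp (-l₁ * x) * Real.exp (-l₂ * α * x) := by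
      rw [← Real.exp_add]; ring_nf
    have e₃ : Real.exp (-(2 * l₁ + l₂ * α) * x)
        = Real.exp (-l₁ * x) * Real.exp (-l₁ * x) * Real.exp (-l₂ * α * x) := by
      rw [← Real.exp_add, ← Real.exp_add]; ring_nf
    have e₄ : Real.exp (-(l₁ + 2 * l₂ * α) * x)
        = Real.exp (-l₁ * x) * Real.exp (-l₂ * α * x) * Real.exp (-l₂ * α * x) := by
      rw [← Real.exp_add, ← Real.exp_add]; ring_nf
    have e₅ : Real.exp (-(2 * (l₁ + l₂ * α)) * x)
        = Real.exp (-l₁ * x) * Real.exp (-l₁ * x) * Real.exp (-l₂ * α * x) * Real.exp (-l₂ * α * x) := by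
      rw [← Real.exp_add, ← Real.exp_add, ← Real.exp_add]; ring_nf
    rw [e₂, e₃, e₄, e₅]; ring
  rw [intervalIntegral.integral_congr hcongr]
  have i₁ := (intble n l₁ 0 x₀).const_mul K
  have i₂ := (intble n (l₁ + l₂ * α) 0 x₀).const_mul (-(K * (1 + θ)))
  have i₃ := (intble n (2 * l₁ + l₂ * α) 0 x₀).const_mul (2 * K * θ)
  have i₄ := (intble n (l₁ + 2 * l₂ * α) 0 x₀).const_mul (K * θ)
  have i₅ := (intble n (2 * (l₁ + l₂ * α)) 0 x₀).const_mul (-(2 * K * θ))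
  rw [intervalIntegral.integral_add (((i₁.add i₂).add i₃).add i₄) i₅,
      intervalIntegral.integral_add ((i₁.add i₂).add i₃) i₄,
      intervalIntegral.integral_add (i₁.add i₂) i₃,
      intervalIntegral.integral_add i₁ i₂,
      intervalIntegral.integral_const_mul, intervalIntegral.integral_const_mul,
      intervalIntegral.integral_const_mul, intervalIntegral.integral_const_mul,
      intervalIntegral.integral_const_mul,
      key n l₁ x₀ hl₁, key n (l₁ + l₂ * α) x₀ hc₂, key n (2 * l₁ + l₂ * α) x₀ hc₃,
      key n (l₁ + 2 * l₂ * α) x₀ hc₄, key n (2 * (l₁ + l₂ * α)) x₀ hc₅]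
  rw [hp₁, hp₂, hp₃, hp₄, hp₅]
  have h2 : ((2 : ℝ) * (l₁ + l₂ * α)) ^ (n + 1) = 2 ^ (n + 1) * (l₁ + l₂ * α) ^ (n + 1) :=
    mul_pow 2 (l₁ + l₂ * α) (n + 1)
  rw [h2]
  field_simp
  ring
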